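/- The syntactic maps ρ and κ respectively enlarge and shrink the semantics: for every modal formula φ and every model M = (X, N, ν) with N a structuring neighborhood on X, ⟦φ⟧_M ⊆ ⟦ρ(φ)⟧_M and ⟦κ(φ)⟧_M ⊆ ⟦φ⟧_M. -/
import Mathlib


/-- Modal formulas over a type `PV` of propositional variables. -/
inductive Formula (PV : Type) : Type
  | top : Formula PV
  | bot : Formula PV
  | var : PV → Formula PV
  | neg : Formula PV → Formula PV
  | and : Formula PV → Formula PV → Formula PV
  | or : Formula PV → Formula PV → Formula PV
  | imp : Formula PV → Formula PV → Formula PV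
  | box : Formula PV → Formula PV
  | dia : Formula PV → Formula PV

/-- A structuring neighborhood: each `N x` is a filter all of whose members contain `x`. -/
def IsStructuringNbhd {X : Type*} (N : X → Filter X) : Prop := ∀ x, ∀ A ∈ N x, x ∈ A

/-- Erosion by a structuring neighborhood. -/
def erosionN {X : Type*} (N : X → Filter X) (Y : Set X) : Set X := {x | Y ∈ N x}

/-- Dilation by a structuring neighborhood. -/
def dilationN {X : Type*} (N : X → Filter X) (Y : Set X) : Set X :=
  {x | ∀ A ∈ N x, (A ∩ Y).Nonempty}

/-- Semantics of modal formulas in a model given by a neighborhood map `N` and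
a valuation `ν`. -/
def sem {PV : Type} {X : Type*} (N : X → Filter X) (ν : PV → Set X) :
    Formula PV → Set X
  | .top => Set.univ
  | .bot => ∅
  | .var p => ν p
  | .neg φ => (sem N ν φ)ᶜ
  | .and φ ψ => sem N ν φ ∩ sem N ν ψ
  | .or φ ψ => sem N ν φ ∪ sem N ν ψ
  | .imp φ ψ => (sem N ν φ)ᶜ ∪ sem N ν ψ
  | .box φ => erosionN N (sem N ν φ)
  | .dia φ => dilationN N (sem N ν φ)

mutual
/-- The syntactic "enlarging" map ρ. -/
def rho {PV : Type} : Formula PV → Formula PV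
  | .top => .top
  | .bot => .bot
  | .var p => .var p
  | .imp φ ψ => .or (.imp (kappa φ) ψ) (.imp φ (rho ψ))
  | .and φ ψ => .or (.and (rho φ) ψ) (.and φ (rho ψ))
  | .or φ ψ => .or (.or (rho φ) ψ) (.or φ (rho ψ))
  | .neg φ => .neg (kappa φ)
  | .box φ => .dia φ
  | .dia φ => .dia (rho φ)

/-- The syntactic "shrinking" map κ. -/
def kappa {PV : Type} : Formula PV → Formula PV
  | .top => .top
  | .bot => .bot
  | .var p => .var p
  | .imp φ ψ => .or (.imp φ (kappa ψ)) (.imp (rho φ) ψ)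
  | .and φ ψ => .or (.and (kappa φ) ψ) (.and φ (kappa ψ))
  | .or φ ψ => .or (.or (kappa φ) ψ) (.or φ (kappa ψ))
  | .neg φ => .neg (rho φ)
  | .box φ => .box (kappa φ)
  | .dia φ => .box φ
end

/-- In every model with a structuring neighborhood, ρ enlarges the semantics
and κ shrinks it. -/
theorem sem_subset_sem_rho_and_sem_kappa_subset {PV : Type} [Countable PV]
    (φ : Formula PV) (X : Type) (N : X → Filter X) (hN : IsStructuringNbhd N)
    (ν : PV → Set X) :
    sem N ν φ ⊆ sem N ν (rho φ) ∧ sem N ν (kappa φ) ⊆ sem N ν φ := by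
  induction φ with
  | top => exact ⟨subset_rfl, subset_rfl⟩
  | bot => exact ⟨subset_rfl, subset_rfl⟩
  | var p => exact ⟨subset_rfl, subset_rfl⟩
  | neg φ ih =>
    constructor
    · intro x hx; exact fun h => hx (ih.2 h)
    · intro x hx; exact fun h => hx (ih.1 h)
  | and φ ψ ih1 ih2 =>
    constructor
    · intro x hx; exact Or.inl ⟨ih1.1 hx.1, hx.2⟩
    · rintro x (⟨h1, h2⟩ | ⟨h1, h2⟩)
      · exact ⟨ih1.2 h1, h2⟩
      · exact ⟨h1, ih2.2 h2⟩
  | or φ ψ ih1 ih2 =>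
    constructor
    · rintro x (h | h)
      · exact Or.inl (Or.inl (ih1.1 h))
      · exact Or.inl (Or.inr h)
    · rintro x ((h | h) | (h | h))
      · exact Or.inl (ih1.2 h)
      · exact Or.inr h
      · exact Or.inl h
      · exact Or.inr (ih2.2 h)
  | imp φ ψ ih1 ih2 =>
    constructor
    · rintro x (h | h)
      · exact Or.inl (Or.inl fun hk => h (ih1.2 hk))
      · exact Or.inl (Or.inr h)
    · rintro x ((h | h) | (h | h))
      · exact Or.inl h
      · exact Or.inr (ih2.2 h)
      · exact Or.inl fun hφ => h (ih1.1 hφ)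
      · exact Or.inr h
  | box φ ih =>
    constructor
    · intro x hx A hA
      exact ⟨x, hN x A hA, hN x _ hx⟩
    · intro x hx
      exact Filter.mem_of_superset hx ih.2
  | dia φ ih =>
    constructor
    · intro x hx A hA
      obtain ⟨y, hyA, hyφ⟩ := hx A hA
      exact ⟨y, hyA, ih.1 hyφ⟩
    · intro x hx A hA
      exact ⟨x, hN x A hA, hN x _ hx⟩
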